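/- arXiv:2009.03709 — 3 statements merged into one kernel-verified Lean document; each statement's English description precedes it below -/
import Mathlib

section
/- Let f(r) = (1/σ₀² + 2(1+tanh r))⁻¹ + (1/σ₀² + 2(1−tanh r))⁻¹ be the total average posterior variance for heterodyne displacement estimation with squeezing r. Then f is minimized over r ∈ ℝ at r = 0, where f(0) = 2σ₀²/(1 + 2σ₀²). -/
open Real

/-- The total average posterior variance
`f(r) = (1/σ₀² + 2(1+tanh r))⁻¹ + (1/σ₀² + 2(1−tanh r))⁻¹` for heterodyne displacement
estimation with probe squeezing `r` is minimized at `r = 0`, with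
`f(0) = 2σ₀²/(1 + 2σ₀²)`. -/
theorem heterodyne_total_variance_minimized_at_zero
    (σ₀ : ℝ) (hσ₀ : 0 < σ₀) :
    (∀ r : ℝ,
      (1 / σ₀ ^ 2 + 2 * (1 + Real.tanh 0))⁻¹ + (1 / σ₀ ^ 2 + 2 * (1 - Real.tanh 0))⁻¹ ≤
      (1 / σ₀ ^ 2 + 2 * (1 + Real.tanh r))⁻¹ + (1 / σ₀ ^ 2 + 2 * (1 - Real.tanh r))⁻¹) ∧
    (1 / σ₀ ^ 2 + 2 * (1 + Real.tanh 0))⁻¹ + (1 / σ₀ ^ 2 + 2 * (1 - Real.tanh 0))⁻¹ =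
      2 * σ₀ ^ 2 / (1 + 2 * σ₀ ^ 2) := by
  have ha : 0 < 1 / σ₀ ^ 2 := by positivity
  set a : ℝ := 1 / σ₀ ^ 2 with hadef
  constructor
  · intro r
    have hc := Real.cosh_pos r
    have ht2 : Real.tanh r ^ 2 < 1 := by
      rw [Real.tanh_eq_sinh_div_cosh, div_pow, div_lt_one (by positivity)]
      nlinarith [Real.cosh_sq r]
    set t := Real.tanh r
    have h1 : 0 < a + 2 * (1 + t) := by nlinarith
    have h2 : 0 < a + 2 * (1 - t) := by nlinarith
    rw [Real.tanh_zero]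
    rw [inv_add_inv h1.ne' h2.ne', inv_add_inv (by positivity : (a + 2*(1+(0:ℝ))) ≠ 0)
      (by positivity : (a + 2*(1-(0:ℝ))) ≠ 0), div_le_div_iff₀ (by positivity) (by positivity)]
    nlinarith [sq_nonneg t, mul_pos h1 h2]
  · rw [Real.tanh_zero, hadef]
    field_simp
    ring
end

section
/- Homodyne displacement estimation with probe squeezing r outperforms heterodyne detection (with unsqueezed probe) in total average posterior variance, i.e., (1/σ₀² + 4e^{2r})⁻¹ + σ₀² < 2σ₀²/(1 + 2σ₀²), if and only if σ₀² < 1/2 and r > −(1/2)·ln(1 − 2σ₀²). -/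
open Real

/-- Homodyne displacement estimation with probe squeezing `r` outperforms heterodyne
detection with an unsqueezed probe in total average posterior variance if and only if
`σ₀² < 1/2` and `r > −(1/2)ln(1 − 2σ₀²)`. -/
theorem homodyne_vs_heterodyne_total_variance
    (σ₀ r : ℝ) (hσ₀ : 0 < σ₀) :
    (1 / σ₀ ^ 2 + 4 * Real.exp (2 * r))⁻¹ + σ₀ ^ 2 < 2 * σ₀ ^ 2 / (1 + 2 * σ₀ ^ 2) ↔
      σ₀ ^ 2 < 1 / 2 ∧ r > -(1 / 2) * Real.log (1 - 2 * σ₀ ^ 2) := by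
  set s := σ₀ ^ 2 with hsdef
  have hs : 0 < s := by positivity
  set E := Real.exp (2 * r) with hEdef
  have hE : 0 < E := Real.exp_pos _
  have hA : 0 < 1 / s + 4 * E := by positivity
  have h1 : (0:ℝ) < 1 + 2 * s := by linarith
  have htA : (1 / s + 4 * E)⁻¹ * (1 / s + 4 * E) = 1 := inv_mul_cancel₀ (ne_of_gt hA)
  have ht : 0 < (1 / s + 4 * E)⁻¹ := by positivity
  have hdiv : 2 * s / (1 + 2 * s) * (1 + 2 * s) = 2 * s := div_mul_cancel₀ _ (ne_of_gt h1)
  have hss : 1 / s * s = 1 := one_div_mul_cancel (ne_of_gt hs)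
  constructor
  · intro h
    have hs2 : s < 1 / 2 := by nlinarith [mul_pos ht hA]
    have h12 : 0 < 1 - 2 * s := by linarith
    have hEgt : (1 - 2 * s)⁻¹ < E := by
      have key : 1 < E * (1 - 2 * s) := by nlinarith [mul_pos ht h1]
      rw [inv_lt_iff_one_lt_mul₀ h12]
      linarith [key]
    refine ⟨hs2, ?_⟩
    have hlog := Real.log_lt_log (by positivity) hEgt
    rw [Real.log_inv, hEdef, Real.log_exp] at hlog
    linarith
  · rintro ⟨hs2, hr⟩
    have h12 : 0 < 1 - 2 * s := by linarith
    have hEgt : (1 - 2 * s)⁻¹ < E := by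
      have h2r : Real.log ((1 - 2 * s)⁻¹) < 2 * r := by
        rw [Real.log_inv]; linarith
      calc (1 - 2 * s)⁻¹ = Real.exp (Real.log ((1 - 2 * s)⁻¹)) :=
            (Real.exp_log (by positivity)).symm
        _ < E := by rw [hEdef]; exact Real.exp_lt_exp.mpr h2r
    have key : 1 < E * (1 - 2 * s) := by
      rw [inv_lt_iff_one_lt_mul₀ h12] at hEgt
      linarith
    rw [lt_div_iff₀ h1]
    nlinarith [mul_pos ht h1, mul_pos ht hs]
end

section
/- The average posterior circular variance for Bayesian phase estimation with a flat prior, coherent probe of amplitude α > 0 and heterodyne detection equals (1 − e^{−α²})/(2α²); explicitly, e^{−α²} ∫₀^∞ |β| e^{−|β|²} ₀F₁(2; α²|β|²) d|β| = (1 − e^{−α²})/(2α²). -/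
/-
The substitution `u = b²` turns the integral into `½ ∫₀^∞ e^{-u} ₀F₁(2; x u) du` with `x = α²`.
Integrating the series of `₀F₁` term by term (legitimate since the integrated absolute values
form the same series at `|x|`), the Gamma integrals `∫₀^∞ e^{-u} uᵏ du = k!` leave
`Σ xᵏ/(k+1)! = (eˣ - 1)/x`.
-/

open Real MeasureTheory

/-- The confluent hypergeometric limit function `₀F₁(2; z) = Σ_{k≥0} z^k/((k+1)! k!)`. -/
noncomputable def hyp0F1two (z : ℝ) : ℝ :=
  ∑' k : ℕ, z ^ k / ((Nat.factorial (k + 1) : ℝ) * (Nat.factorial k : ℝ))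

open Set
open scoped Nat

theorem integral_Ioi_smul_comp_sq {E : Type*} [NormedAddCommGroup E] [NormedSpace ℝ E]
    (g : ℝ → E) : ∫ x in Ioi 0, x • g (x ^ 2) = (2 : ℝ)⁻¹ • ∫ u in Ioi 0, g u := by
  rw [← integral_comp_rpow_Ioi_of_pos (g := g) two_pos, ← integral_smul]
  refine setIntegral_congr_fun measurableSet_Ioi fun x _ => ?_
  norm_num [smul_smul, ← mul_assoc]

theorem integrableOn_exp_neg_mul_pow (k : ℕ) :
    IntegrableOn (fun u : ℝ => exp (-u) * u ^ k) (Ioi 0) := by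
  refine (GammaIntegral_convergent (s := k + 1) k.cast_add_one_pos).congr_fun
    (fun u _ => ?_) measurableSet_Ioi
  simp [rpow_natCast]

theorem integral_exp_neg_mul_pow (k : ℕ) : ∫ u in Ioi 0, exp (-u) * u ^ k = k ! := by
  rw [← Real.Gamma_nat_eq_factorial, Gamma_eq_integral k.cast_add_one_pos]
  refine setIntegral_congr_fun measurableSet_Ioi fun u _ => ?_
  simp [rpow_natCast]

theorem summable_pow_div_factorial_succ (x : ℝ) : Summable fun k : ℕ => x ^ k / (k + 1)! := by
  refine (summable_pow_div_factorial |x|).of_norm_bounded fun k => ?_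
  rw [norm_div, norm_pow, Real.norm_eq_abs, RCLike.norm_natCast]
  gcongr
  exact k.le_succ

theorem hasSum_pow_succ_div_factorial (x : ℝ) :
    HasSum (fun k : ℕ => x ^ (k + 1) / (k + 1)!) (exp x - 1) := by
  have h := (hasSum_nat_add_iff' 1).mpr (exp_eq_exp_ℝ ▸ NormedSpace.expSeries_div_hasSum_exp x)
  simpa using h

theorem integral_exp_neg_mul_hyp0F1two_term (x : ℝ) (k : ℕ) :
    ∫ u in Ioi 0, exp (-u) * ((x * u) ^ k / ((k + 1)! * k !)) = x ^ k / (k + 1)! := by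
  calc ∫ u in Ioi 0, exp (-u) * ((x * u) ^ k / ((k + 1)! * k !))
      = x ^ k / ((k + 1)! * k !) * ∫ u in Ioi 0, exp (-u) * u ^ k := by
        rw [← integral_const_mul]
        refine setIntegral_congr_fun measurableSet_Ioi fun u _ => ?_
        ring
    _ = x ^ k / (k + 1)! := by
        rw [integral_exp_neg_mul_pow]
        field_simp

theorem integrableOn_exp_neg_mul_hyp0F1two_term (x : ℝ) (k : ℕ) :
    IntegrableOn (fun u => exp (-u) * ((x * u) ^ k / ((k + 1)! * k !))) (Ioi 0) :=
  ((integrableOn_exp_neg_mul_pow k).const_mul (x ^ k / ((k + 1)! * k !))).congr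
    (ae_of_all _ fun u => by ring)

theorem norm_exp_neg_mul_hyp0F1two_term (x : ℝ) (k : ℕ) {u : ℝ} (hu : 0 ≤ u) :
    ‖exp (-u) * ((x * u) ^ k / ((k + 1)! * k !))‖ =
      exp (-u) * ((|x| * u) ^ k / ((k + 1)! * k !)) := by
  rw [Real.norm_eq_abs, abs_mul, abs_div, abs_pow, abs_mul, abs_of_nonneg hu, abs_exp,
    abs_of_pos (by positivity : (0 : ℝ) < (k + 1)! * k !)]

theorem hasSum_integral_exp_neg_mul_hyp0F1two (x : ℝ) :
    HasSum (fun k : ℕ => x ^ k / (k + 1)!) (∫ u in Ioi 0, exp (-u) * hyp0F1two (x * u)) := by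
  have hnorm (k : ℕ) : ∫ u in Ioi 0, ‖exp (-u) * ((x * u) ^ k / ((k + 1)! * k !))‖ =
      |x| ^ k / (k + 1)! := by
    rw [← integral_exp_neg_mul_hyp0F1two_term]
    exact setIntegral_congr_fun measurableSet_Ioi fun u hu =>
      norm_exp_neg_mul_hyp0F1two_term x k hu.le
  have := hasSum_integral_of_summable_integral_norm (integrableOn_exp_neg_mul_hyp0F1two_term x)
    (by simpa only [hnorm] using summable_pow_div_factorial_succ |x|)
  simpa only [integral_exp_neg_mul_hyp0F1two_term, tsum_mul_left, hyp0F1two] using this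

theorem mul_integral_exp_neg_mul_hyp0F1two (x : ℝ) :
    x * ∫ u in Ioi 0, exp (-u) * hyp0F1two (x * u) = exp x - 1 :=
  ((hasSum_integral_exp_neg_mul_hyp0F1two x).mul_left x).unique <| by
    simpa only [pow_succ', mul_div_assoc] using hasSum_pow_succ_div_factorial x

/-- Average posterior circular variance for Bayesian phase estimation with a flat prior,
coherent probe of amplitude `α > 0`, and heterodyne detection:
`e^{−α²}∫₀^∞ b e^{−b²} ₀F₁(2; α²b²) db = (1 − e^{−α²})/(2α²)`. -/
theorem average_phase_variance_coherent_heterodyne (α : ℝ) (hα : 0 < α) :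
    Real.exp (-α ^ 2) *
        (∫ b in Set.Ioi (0 : ℝ), b * Real.exp (-b ^ 2) * hyp0F1two (α ^ 2 * b ^ 2)) =
      (1 - Real.exp (-α ^ 2)) / (2 * α ^ 2) := by
  have hsubst := integral_Ioi_smul_comp_sq fun u => exp (-u) * hyp0F1two (α ^ 2 * u)
  simp only [smul_eq_mul, ← mul_assoc] at hsubst
  have hseries := mul_integral_exp_neg_mul_hyp0F1two (α ^ 2)
  rw [hsubst, exp_neg]
  field_simp
  linear_combination hseries
end
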